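/- arXiv:1008.1469 — 2 statements merged into one kernel-verified Lean document; each statement's English description precedes it below -/
import Mathlib

section
/- For all nonnegative integers m and n, the generating function identity holds: the number (weighted by q^{|λ|}) of partitions λ with largest part at most m+1 and exactly n parts is q^n * [m+n choose n]_q. -/
open Finset

/-!
Sorting the partitions by whether the largest part is `m + 2` (and removing it when it is) gives
`G(m + 1, n + 1) = G(m, n + 1) + q ^ (m + 2) G(m + 1, n)` for the generating function `G(m, n)`.
By the q-Pascal rule `[a + 1, b + 1] = [a, b + 1] + q ^ (a - b) [a, b]`, the right-hand side
`q ^ n [m + n, n]` obeys the same recursion, and both have the boundary values `G(m, 0) = 1` and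
`G(0, n) = q ^ n`.
-/

/-- The Gaussian (q-)binomial coefficient `[a choose b]_q`, defined as
`∏_{i=1}^{b} (1 - q^(a-i+1)) / (1 - q^i)` (which is `0` when `b > a`). -/
noncomputable def qbinom (q : RatFunc ℚ) (a b : ℕ) : RatFunc ℚ :=
  ∏ i ∈ Finset.range b, (1 - q ^ ((a : ℤ) - i)) / (1 - q ^ ((i : ℤ) + 1))

lemma qbinom_zero_right (q : RatFunc ℚ) (a : ℕ) : qbinom q a 0 = 1 := prod_range_zero _

lemma qbinom_succ_right (q : RatFunc ℚ) (a b : ℕ) :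
    qbinom q a (b + 1) = qbinom q a b * ((1 - q ^ ((a : ℤ) - b)) / (1 - q ^ (b + 1))) := by
  rw [qbinom, prod_range_succ, ← qbinom]
  norm_cast

section QBinom

variable {q : RatFunc ℚ}

lemma qbinom_succ_succ_mul {b : ℕ} (hq : q ^ (b + 1) ≠ 1) (a : ℕ) :
    qbinom q (a + 1) (b + 1) * (1 - q ^ (b + 1)) = qbinom q a b * (1 - q ^ (a + 1)) := by
  have hb : (1 : RatFunc ℚ) - q ^ (b + 1) ≠ 0 := sub_ne_zero.2 hq.symm
  simp only [qbinom, prod_div_distrib]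
  rw [prod_range_succ' (fun i : ℕ => 1 - q ^ (((a + 1 : ℕ) : ℤ) - i)), prod_range_succ]
  have hz (k : ℕ) : q ^ ((k : ℤ) + 1) = q ^ (k + 1) := by exact_mod_cast zpow_natCast q (k + 1)
  push_cast
  simp only [add_sub_add_right_eq_sub, sub_zero, hz]
  rw [div_mul_eq_mul_div, mul_div_mul_right _ _ hb, div_mul_eq_mul_div]

lemma qbinom_pascal {b : ℕ} (hq : q ^ (b + 1) ≠ 1) (a : ℕ) :
    qbinom q (a + 1) (b + 1) = qbinom q a (b + 1) + q ^ ((a : ℤ) - b) * qbinom q a b := by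
  have hb : (1 : RatFunc ℚ) - q ^ (b + 1) ≠ 0 := sub_ne_zero.2 hq.symm
  have hpow : q ^ ((a : ℤ) - b) * q ^ (b + 1) = q ^ (a + 1) := by
    rw [← zpow_natCast, ← zpow_natCast, ← zpow_add' (Or.inr (Or.inl (by omega)))]
    congr 1
    push_cast
    ring
  refine mul_right_cancel₀ hb ?_
  rw [qbinom_succ_succ_mul hq, add_mul, qbinom_succ_right]
  field_simp
  linear_combination (qbinom q a b) * hpow

lemma qbinom_self (hq : ∀ k : ℕ, q ^ (k + 1) ≠ 1) (a : ℕ) : qbinom q a a = 1 := by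
  induction a with
  | zero => exact qbinom_zero_right q 0
  | succ a ih =>
    refine mul_right_cancel₀ (sub_ne_zero.2 (hq a).symm) ?_
    rw [qbinom_succ_succ_mul (hq a), ih, one_mul]

end QBinom

lemma RatFunc.X_pow_succ_ne_one {K : Type*} [Field K] (k : ℕ) :
    (RatFunc.X : RatFunc K) ^ (k + 1) ≠ 1 := by
  rw [← RatFunc.algebraMap_X, ← map_pow, ← map_one (algebraMap (Polynomial K) (RatFunc K)), Ne,
    (IsFractionRing.injective (Polynomial K) (RatFunc K)).eq_iff, ← sub_eq_zero, ← Polynomial.C_1]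
  exact Polynomial.X_pow_sub_C_ne_zero k.succ_pos 1

def antitoneTuples (n m : ℕ) : Finset (Fin n → Fin m) := {f | ∀ i j : Fin n, i ≤ j → f j ≤ f i}

lemma mem_antitoneTuples {n m : ℕ} {f : Fin n → Fin m} : f ∈ antitoneTuples n m ↔ Antitone f := by
  simp [antitoneTuples, Antitone]

lemma Fin.antitone_cons {α : Type*} [Preorder α] {n : ℕ} {a : α} {g : Fin n → α}
    (hg : Antitone g) (ha : ∀ i, g i ≤ a) : Antitone (Fin.cons a g : Fin (n + 1) → α) := by
  intro i j hij
  cases j using Fin.cases with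
  | zero => rw [Fin.le_zero_iff.1 hij]
  | succ j =>
    cases i using Fin.cases with
    | zero => exact ha j
    | succ i => exact hg (Fin.succ_le_succ_iff.1 hij)

lemma filter_antitoneTuples_lt_last (n m : ℕ) :
    {f ∈ antitoneTuples (n + 1) (m + 2) | f 0 < Fin.last (m + 1)} =
      (antitoneTuples (n + 1) (m + 1)).map
        ⟨(Fin.castSucc ∘ ·), (Fin.castSucc_injective _).comp_left⟩ := by
  ext f
  simp only [mem_filter, mem_map, mem_antitoneTuples, Function.Embedding.coeFn_mk]
  constructor
  · rintro ⟨hf, h0⟩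
    choose g hg using fun k => Fin.exists_castSucc_eq.2 ((hf (Fin.zero_le k)).trans_lt h0).ne
    refine ⟨g, fun i j hij => ?_, funext hg⟩
    rw [← Fin.castSucc_le_castSucc_iff, hg, hg]
    exact hf hij
  · rintro ⟨g, hg, rfl⟩
    exact ⟨Fin.strictMono_castSucc.monotone.comp_antitone hg, Fin.castSucc_lt_last _⟩

lemma filter_antitoneTuples_not_lt_last (n m : ℕ) :
    {f ∈ antitoneTuples (n + 1) (m + 2) | ¬ f 0 < Fin.last (m + 1)} =
      (antitoneTuples n (m + 2)).map ⟨Fin.cons (Fin.last (m + 1)), Fin.cons_right_injective _⟩ := by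
  ext f
  simp only [mem_filter, mem_map, mem_antitoneTuples, Function.Embedding.coeFn_mk, not_lt]
  constructor
  · rintro ⟨hf, h0⟩
    refine ⟨Fin.tail f, hf.comp_monotone (Fin.strictMono_succ.monotone), ?_⟩
    rw [← le_antisymm (Fin.le_last _) h0, Fin.cons_self_tail]
  · rintro ⟨g, hg, rfl⟩
    exact ⟨Fin.antitone_cons hg fun _ => Fin.le_last _, le_rfl⟩

section GF

variable {R : Type*} [CommSemiring R]

-- The partition with parts `f 0 + 1 ≥ ⋯ ≥ f (n - 1) + 1` is encoded by the antitone tuple `f`.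
def boundedPartsGF (q : R) (m n : ℕ) : R :=
  ∑ f ∈ antitoneTuples n (m + 1), q ^ ∑ i, ((f i : ℕ) + 1)

lemma boundedPartsGF_zero_right (q : R) (m : ℕ) : boundedPartsGF q m 0 = 1 := by
  simp [boundedPartsGF, antitoneTuples]

lemma boundedPartsGF_zero_left (q : R) (n : ℕ) : boundedPartsGF q 0 n = q ^ n := by
  simp [boundedPartsGF, antitoneTuples]

lemma boundedPartsGF_succ_succ (q : R) (m n : ℕ) :
    boundedPartsGF q (m + 1) (n + 1) =
      boundedPartsGF q m (n + 1) + q ^ (m + 2) * boundedPartsGF q (m + 1) n := by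
  rw [boundedPartsGF, ← sum_filter_add_sum_filter_not _ (fun f => f 0 < Fin.last (m + 1)),
    filter_antitoneTuples_lt_last, filter_antitoneTuples_not_lt_last, sum_map, sum_map,
    boundedPartsGF, boundedPartsGF, mul_sum]
  refine congrArg₂ (· + ·) rfl (sum_congr rfl fun g _ => ?_)
  simp only [Function.Embedding.coeFn_mk, Fin.sum_univ_succ, Fin.cons_zero, Fin.cons_succ,
    Fin.val_last]
  rw [pow_add]

end GF

theorem boundedPartsGF_eq_pow_mul_qbinom {q : RatFunc ℚ} (hq : ∀ k : ℕ, q ^ (k + 1) ≠ 1)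
    (m n : ℕ) : boundedPartsGF q m n = q ^ n * qbinom q (m + n) n := by
  induction n generalizing m with
  | zero => rw [boundedPartsGF_zero_right, qbinom_zero_right, pow_zero, mul_one]
  | succ n ihn =>
    induction m with
    | zero => rw [boundedPartsGF_zero_left, zero_add, qbinom_self hq, mul_one]
    | succ m ihm =>
      have hexp : ((m + n + 1 : ℕ) : ℤ) - n = ((m + 1 : ℕ) : ℤ) := by push_cast; ring
      rw [boundedPartsGF_succ_succ, ihm, ihn, show m + 1 + (n + 1) = m + n + 1 + 1 by ring,
        show m + 1 + n = m + n + 1 by ring, ← add_assoc, qbinom_pascal (hq n) (m + n + 1), hexp,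
        zpow_natCast]
      ring

/-- The generating function for partitions with exactly `n` parts, each part at most `m+1`
(a partition being encoded by the weakly decreasing sequence of its parts `i ↦ f i + 1`),
weighted by `q^{|λ|}`, equals `q^n * [m+n choose n]_q`. -/
theorem gf_partitions_bounded_parts (m n : ℕ) :
    ∑ f ∈ {f : Fin n → Fin (m + 1) | ∀ i j : Fin n, i ≤ j → f j ≤ f i},
      (RatFunc.X : RatFunc ℚ) ^ (∑ i, ((f i : ℕ) + 1)) =
    RatFunc.X ^ n * qbinom RatFunc.X (m + n) n :=
  boundedPartsGF_eq_pow_mul_qbinom RatFunc.X_pow_succ_ne_one m n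
end

section
/- For all nonnegative integers m and n, the sum of q^{|λ|} over all partitions λ into n distinct parts, each part at most m+1, equals [m+1 choose n]_q * q^{C(n+1, 2)}. -/
open Finset

lemma X_zpow_sub_one_ne (k : ℕ) : (1 : RatFunc ℚ) - RatFunc.X ^ ((k:ℤ)+1) ≠ 0 := by
  rw [sub_ne_zero]
  intro h
  have : (RatFunc.X : RatFunc ℚ) ^ ((k+1 : ℕ)) = 1 := by
    rw [← zpow_natCast]; push_cast; exact h.symm
  rw [← RatFunc.algebraMap_X (K := ℚ), ← map_pow, ← map_one (algebraMap (Polynomial ℚ) (RatFunc ℚ))] at this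
  have := RatFunc.algebraMap_injective ℚ this
  have hd := congrArg Polynomial.natDegree this
  simp [Polynomial.natDegree_X_pow] at hd

noncomputable def qN (a b : ℕ) : RatFunc ℚ := ∏ i ∈ Finset.range b, (1 - RatFunc.X ^ ((a : ℤ) - i))
noncomputable def qD (b : ℕ) : RatFunc ℚ := ∏ i ∈ Finset.range b, (1 - RatFunc.X ^ ((i : ℤ) + 1))

lemma qbinom_eq_div (a b : ℕ) : qbinom RatFunc.X a b = qN a b / qD b := by
  rw [qbinom, qN, qD, Finset.prod_div_distrib]

lemma qD_ne_zero (b : ℕ) : qD b ≠ 0 :=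
  Finset.prod_ne_zero_iff.mpr fun i _ => X_zpow_sub_one_ne i

lemma qbinom_succ_succ (a b : ℕ) :
    qbinom RatFunc.X (a+1) (b+1) =
      qbinom RatFunc.X a (b+1) + RatFunc.X ^ ((a:ℤ) - b) * qbinom RatFunc.X a b := by
  have hN1 : qN (a+1) (b+1) = (1 - RatFunc.X ^ ((a:ℤ)+1)) * qN a b := by
    rw [qN, Finset.prod_range_succ', qN, mul_comm]
    congr 1
    refine Finset.prod_congr rfl fun i _ => ?_
    congr 1
    push_cast; ring_nf
  have hN2 : qN a (b+1) = qN a b * (1 - RatFunc.X ^ ((a:ℤ)-b)) := by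
    rw [qN, Finset.prod_range_succ, qN]
  have hD : qD (b+1) = qD b * (1 - RatFunc.X ^ ((b:ℤ)+1)) := by
    rw [qD, Finset.prod_range_succ, qD]
  have hsplit : (RatFunc.X : RatFunc ℚ) ^ ((a:ℤ)+1) =
      RatFunc.X ^ ((a:ℤ)-b) * RatFunc.X ^ ((b:ℤ)+1) := by
    rw [← zpow_add₀ RatFunc.X_ne_zero]; ring_nf
  rw [qbinom_eq_div, qbinom_eq_div, qbinom_eq_div, hN1, hN2, hD]
  have h1 := qD_ne_zero b
  have h2 := X_zpow_sub_one_ne b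
  field_simp
  rw [hsplit]
  ring

noncomputable def Sgen (a b : ℕ) : RatFunc ℚ :=
  ∑ s ∈ (Finset.range a).powersetCard b, RatFunc.X ^ (∑ x ∈ s, (x+1))

lemma Sgen_recur (a b : ℕ) :
    Sgen (a+1) (b+1) = Sgen a (b+1) + RatFunc.X ^ (a+1) * Sgen a b := by
  have ha : a ∉ Finset.range a := by simp
  rw [Sgen, Finset.range_add_one, Finset.powersetCard_succ_insert ha, Finset.sum_union, Sgen, Sgen]
  · congr 1
    rw [Finset.sum_image, Finset.mul_sum]
    · refine Finset.sum_congr rfl fun s hs => ?_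
      have has : a ∉ s := fun h => ha ((Finset.mem_powersetCard.mp hs).1 h)
      rw [Finset.sum_insert has, ← pow_add]
    · intro s hs t ht hst
      have has : a ∉ s := fun h => ha ((Finset.mem_powersetCard.mp hs).1 h)
      have hat : a ∉ t := fun h => ha ((Finset.mem_powersetCard.mp ht).1 h)
      rw [← Finset.erase_insert has, ← Finset.erase_insert hat, hst]
  · rw [Finset.disjoint_left]
    intro s hs hs2
    obtain ⟨t, ht, rfl⟩ := Finset.mem_image.mp hs2
    exact ha ((Finset.mem_powersetCard.mp hs).1 (Finset.mem_insert_self a t))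

lemma Sgen_eq (a : ℕ) : ∀ b, Sgen a b = qbinom RatFunc.X a b * RatFunc.X ^ ((b+1).choose 2) := by
  induction a with
  | zero =>
    rintro (_ | b)
    · simp [Sgen, qbinom]
    · rw [Sgen]
      simp only [Finset.range_zero]
      rw [Finset.powersetCard_eq_empty.mpr (by simp)]
      rw [qbinom]
      rw [Finset.prod_eq_zero (Finset.mem_range.mpr (Nat.succ_pos b))]
      · simp
      · simp
  | succ a ih =>
    rintro (_ | b)
    · simp [Sgen, qbinom]
    · rw [Sgen_recur, ih, ih, qbinom_succ_succ]
      have hT : (b+1+1).choose 2 = (b+1).choose 2 + (b+1) := by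
        rw [Nat.choose_succ_succ, Nat.choose_one_right, Nat.add_comm]
      have hx : (RatFunc.X : RatFunc ℚ) ^ (a+1) * RatFunc.X ^ ((b+1).choose 2) =
          RatFunc.X ^ ((a:ℤ) - b) * RatFunc.X ^ ((b+1+1).choose 2) := by
        rw [← zpow_natCast (RatFunc.X : RatFunc ℚ) (a+1),
          ← zpow_natCast (RatFunc.X : RatFunc ℚ) ((b+1).choose 2),
          ← zpow_natCast (RatFunc.X : RatFunc ℚ) ((b+1+1).choose 2),
          ← zpow_add₀ RatFunc.X_ne_zero, ← zpow_add₀ RatFunc.X_ne_zero]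
        congr 1
        push_cast [hT]
        ring
      linear_combination (qbinom RatFunc.X a b) * hx

/-- The generating function for partitions into `n` distinct parts, each part at most `m+1`
(encoded by the strictly decreasing sequence of parts `i ↦ f i + 1`),
weighted by `q^{|λ|}`, equals `[m+1 choose n]_q * q^{C(n+1,2)}`. -/
theorem gf_distinct_partitions_bounded_parts (m n : ℕ) :
    ∑ f ∈ {f : Fin n → Fin (m + 1) | ∀ i j : Fin n, i < j → f j < f i},
      (RatFunc.X : RatFunc ℚ) ^ (∑ i, ((f i : ℕ) + 1)) =
    qbinom RatFunc.X (m + 1) n * RatFunc.X ^ ((n + 1).choose 2) := by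
  rw [← Sgen_eq, Sgen]
  have hinj : ∀ f : Fin n → Fin (m+1), (∀ i j : Fin n, i < j → f j < f i) →
      Function.Injective (fun k : Fin n => ((f k : ℕ))) := by
    intro f hf
    have : StrictAnti f := fun i j h => hf i j h
    exact Fin.val_injective.comp this.injective
  refine Finset.sum_bij' (fun f _ => Finset.image (fun k : Fin n => ((f k : ℕ))) Finset.univ)
    (fun s hs => fun i => ⟨(s.orderEmbOfFin (Finset.mem_powersetCard.mp hs).2) i.rev,
      Finset.mem_range.mp ((Finset.mem_powersetCard.mp hs).1
        (Finset.orderEmbOfFin_mem s (Finset.mem_powersetCard.mp hs).2 i.rev))⟩)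
    ?_ ?_ ?_ ?_ ?_
  · -- hi : image lands in powersetCard
    intro f hf
    rw [Finset.mem_powersetCard]
    constructor
    · intro x hx
      obtain ⟨k, -, rfl⟩ := Finset.mem_image.mp hx
      exact Finset.mem_range.mpr (f k).isLt
    · rw [Finset.card_image_of_injective _ (hinj f (by simpa using hf))]
      simp
  · -- hj : inverse is strictly decreasing
    intro s hs
    simp only [Finset.mem_filter, Finset.mem_univ, true_and, Set.mem_setOf_eq,
      Finset.mem_coe]
    intro i j hij
    have h1 : j.rev < i.rev := Fin.rev_lt_rev.mpr hij
    exact (s.orderEmbOfFin (Finset.mem_powersetCard.mp hs).2).strictMono h1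
  · -- left_inv
    intro f hf
    have hP : ∀ i j : Fin n, i < j → f j < f i := by simpa using hf
    funext i
    apply Fin.ext
    set s := Finset.image (fun k : Fin n => ((f k : ℕ))) Finset.univ with hsdef
    have hcard : s.card = n := by
      rw [hsdef, Finset.card_image_of_injective _ (hinj f hP)]; simp
    have hmono : StrictMono (fun k : Fin n => ((f k.rev : ℕ))) := by
      intro i j hij
      exact hP j.rev i.rev (Fin.rev_lt_rev.mpr hij)
    have hmem : ∀ k : Fin n, ((f k.rev : ℕ)) ∈ s := by
      intro k; exact Finset.mem_image.mpr ⟨k.rev, Finset.mem_univ _, rfl⟩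
    have huniq := Finset.orderEmbOfFin_unique hcard hmem hmono
    show (s.orderEmbOfFin _) i.rev = (f i : ℕ)
    rw [← congrFun huniq i.rev, Fin.rev_rev]
  · -- right_inv
    intro s hs
    have hcard := (Finset.mem_powersetCard.mp hs).2
    refine Finset.eq_of_subset_of_card_le ?_ ?_
    · intro x hx
      obtain ⟨k, -, rfl⟩ := Finset.mem_image.mp hx
      exact Finset.orderEmbOfFin_mem s hcard k.rev
    · rw [Finset.card_image_of_injective _
          (fun x y hxy => Fin.rev_injective ((s.orderEmbOfFin hcard).injective hxy)),
        Finset.card_univ, Fintype.card_fin, hcard]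
  · -- values agree
    intro f hf
    congr 1
    rw [Finset.sum_image]
    intro x _ y _ h
    exact hinj f (by simpa using hf) h
end
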